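/- For the Werner case with λ ∈ [√3/2, 1], the constrained optimum occurs at n_x = −1/√(4λ²−2), and substituting gives ε_min = 2λ√(4λ²−2)/(4λ²−1); moreover ε_min(√3/2) = √3/2 and ε_min(1) = 2√2/3, and ε_min is continuous at λ = √3/2. -/

import Mathlib

noncomputable section

/-- ε(n_x, λ) = −λ·[n_x³ − (1−n_x²)√(λ² + n_x²(1−2λ²))]/[n_x² + (1−n_x²)²λ²]. -/
def epsFun (lam nx : ℝ) : ℝ :=
  -lam * (nx ^ 3 - (1 - nx ^ 2) * Real.sqrt (lam ^ 2 + nx ^ 2 * (1 - 2 * lam ^ 2))) /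
    (nx ^ 2 + (1 - nx ^ 2) ^ 2 * lam ^ 2)

/-- The piecewise minimal measurement strength for the Werner family. -/
def wernerEpsMin (lam : ℝ) : ℝ :=
  if lam ≤ Real.sqrt 3 / 2 then lam
  else 2 * lam * Real.sqrt (4 * lam ^ 2 - 2) / (4 * lam ^ 2 - 1)

/-!
Write `m = -n_x ∈ (0, 1]` and `s = √(4λ² - 2) ∈ [1, √2]`, so that `4λ² = s² + 2`. Clearing
denominators, `ε(n_x, λ) ≥ 2λs/(s² + 1)` becomes a polynomial inequality
`L ≤ (1 - m²)(s² + 1)·B` with `B = 2√(λ² + m²(1 - 2λ²))`. When `L > 0` we square, and the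
difference of squares factors as `(ms - 1)²` times a manifestly nonnegative quantity, so equality
holds exactly at `m = 1/s`.
-/

open Real Set

section KeyInequality

variable {m s : ℝ}

-- As a quadratic in `m²` its discriminant is `-(2 - s²)(s⁶ + 8s⁴ + 21s² + 14) ≤ 0`.
lemma werner_quartic_nonneg (hs : s ^ 2 ≤ 2) :
    0 ≤ (2 + s ^ 2) - m ^ 2 * (s ^ 4 + 5 * s ^ 2 + 2) + m ^ 4 * (2 + s ^ 2) ^ 2 := by
  have hdisc : 0 ≤ (2 - s ^ 2) * (s ^ 6 + 8 * s ^ 4 + 21 * s ^ 2 + 14) :=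
    mul_nonneg (by linarith) (by positivity)
  refine nonneg_of_mul_nonneg_right ?_ (by positivity : (0 : ℝ) < 4 * (2 + s ^ 2) ^ 2)
  nlinarith [sq_nonneg (2 * (2 + s ^ 2) ^ 2 * m ^ 2 - (s ^ 4 + 5 * s ^ 2 + 2))]

lemma werner_optimality_ineq {B : ℝ} (hm0 : 0 < m) (hm1 : m ≤ 1) (hs2 : s ^ 2 ≤ 2)
    (hB : 0 ≤ B) (hB2 : B ^ 2 = s ^ 2 + 2 - 2 * m ^ 2 * s ^ 2) :
    s * (4 * m ^ 2 + (1 - m ^ 2) ^ 2 * (s ^ 2 + 2)) - 2 * m ^ 3 * (s ^ 2 + 1)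
      ≤ (1 - m ^ 2) * (s ^ 2 + 1) * B := by
  set L := s * (4 * m ^ 2 + (1 - m ^ 2) ^ 2 * (s ^ 2 + 2)) - 2 * m ^ 3 * (s ^ 2 + 1)
  set Q := (2 + s ^ 2) - m ^ 2 * (s ^ 4 + 5 * s ^ 2 + 2) + m ^ 4 * (2 + s ^ 2) ^ 2
  have hm2 : 0 ≤ 1 - m ^ 2 := by nlinarith
  have hR : 0 ≤ (1 - m ^ 2) * (s ^ 2 + 1) * B := by positivity
  rcases le_or_gt L 0 with hL | hL
  · linarith
  have hfactor : ((1 - m ^ 2) * (s ^ 2 + 1) * B) ^ 2 - L ^ 2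
      = (m * s - 1) ^ 2 * (2 * m * L + (1 - m ^ 2) * Q) := by
    linear_combination ((1 - m ^ 2) * (s ^ 2 + 1)) ^ 2 * hB2
  have hQ : 0 ≤ Q := werner_quartic_nonneg hs2
  refine le_of_sq_le_sq ?_ hR
  have hdefect : 0 ≤ (m * s - 1) ^ 2 * (2 * m * L + (1 - m ^ 2) * Q) := by positivity
  linarith

end KeyInequality

section Optimum

variable {lam s : ℝ}

lemma epsFun_neg_inv (hs : 0 < s) (hs2 : s ^ 2 = 4 * lam ^ 2 - 2) :
    epsFun lam (-(1 / s)) = 2 * lam * s / (4 * lam ^ 2 - 1) := by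
  have hroot : lam ^ 2 + (-(1 / s)) ^ 2 * (1 - 2 * lam ^ 2) = (s / 2) ^ 2 := by
    field_simp
    linear_combination (2 - s ^ 2) * hs2
  have hden : (-(1 / s)) ^ 2 + (1 - (-(1 / s)) ^ 2) ^ 2 * lam ^ 2 ≠ 0 := by
    rw [neg_sq]
    positivity
  rw [epsFun, hroot, sqrt_sq (by positivity), div_eq_div_iff hden (by nlinarith)]
  field_simp
  linear_combination (-lam * (s ^ 2 + 1)) * hs2

lemma epsFun_neg_inv_le (hlam0 : 0 ≤ lam) (hlam1 : lam ≤ 1) (hs1 : 1 ≤ s)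
    (hs2 : s ^ 2 = 4 * lam ^ 2 - 2) {nx : ℝ} (hnx1 : -1 ≤ nx) (hnx0 : nx < 0) :
    epsFun lam (-(1 / s)) ≤ epsFun lam nx := by
  have hnx2 : nx ^ 2 ≤ 1 := by nlinarith
  have hrad : 0 ≤ lam ^ 2 + nx ^ 2 * (1 - 2 * lam ^ 2) := by
    nlinarith [mul_nonneg (sub_nonneg.2 hnx2) (sq_nonneg lam), mul_nonneg (sq_nonneg nx)
      (by nlinarith : 0 ≤ 1 - lam ^ 2)]
  rw [epsFun_neg_inv (by linarith) hs2, epsFun]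
  set R := sqrt (lam ^ 2 + nx ^ 2 * (1 - 2 * lam ^ 2))
  have hR2 : R ^ 2 = lam ^ 2 + nx ^ 2 * (1 - 2 * lam ^ 2) := sq_sqrt hrad
  have key := werner_optimality_ineq (m := -nx) (s := s) (B := 2 * R) (by linarith) (by linarith)
    (by nlinarith) (by positivity) (by linear_combination 4 * hR2 + (2 * nx ^ 2 - 1) * hs2)
  have hden : 0 < nx ^ 2 + (1 - nx ^ 2) ^ 2 * lam ^ 2 := by
    have : 0 < nx ^ 2 := by nlinarith
    positivity
  rw [div_le_div_iff₀ (by nlinarith) hden]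
  linear_combination (lam / 2) * key
    - (lam * (nx ^ 3 - (1 - nx ^ 2) * R) + lam * s * (1 - nx ^ 2) ^ 2 / 2) * hs2

end Optimum

lemma sqrt_three_div_two_sq : (√3 / 2) ^ 2 = 3 / 4 := by
  rw [div_pow, sq_sqrt (by norm_num)]
  norm_num

lemma one_le_sqrt_four_mul_sq_sub_two {lam : ℝ} (h : √3 / 2 ≤ lam) :
    1 ≤ √(4 * lam ^ 2 - 2) := by
  have : 3 / 4 ≤ lam ^ 2 := sqrt_three_div_two_sq ▸ pow_le_pow_left₀ (by positivity) h 2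
  exact one_le_sqrt.2 (by linarith)

def wernerEpsBranch (lam : ℝ) : ℝ :=
  2 * lam * √(4 * lam ^ 2 - 2) / (4 * lam ^ 2 - 1)

lemma wernerEpsMin_eqOn_Ici : EqOn wernerEpsMin wernerEpsBranch (Ici (√3 / 2)) := by
  intro lam hlam
  rcases (mem_Ici.1 hlam).eq_or_lt with rfl | hlt
  · rw [wernerEpsMin, if_pos le_rfl, wernerEpsBranch, sqrt_three_div_two_sq]
    norm_num
  · rw [wernerEpsMin, if_neg hlt.not_ge, wernerEpsBranch]

lemma continuousAt_wernerEpsBranch {lam : ℝ} (h : 4 * lam ^ 2 - 1 ≠ 0) :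
    ContinuousAt wernerEpsBranch lam := by
  unfold wernerEpsBranch
  fun_prop (disch := exact h)

lemma continuousAt_wernerEpsMin_sqrt_three_div_two : ContinuousAt wernerEpsMin (√3 / 2) := by
  have hbranch : ContinuousAt wernerEpsBranch (√3 / 2) :=
    continuousAt_wernerEpsBranch (by rw [sqrt_three_div_two_sq]; norm_num)
  refine continuousAt_iff_continuous_left_right.2 ⟨?_, ?_⟩
  · exact continuousWithinAt_id.congr (fun x hx => if_pos hx) (if_pos le_rfl)
  · exact hbranch.continuousWithinAt.congr wernerEpsMin_eqOn_Ici
      (wernerEpsMin_eqOn_Ici self_mem_Ici)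

/-- for λ ∈ [√3/2,1] the constrained optimum over n_x ∈ [−1,0) occurs at
n_x = −1/√(4λ²−2) with value 2λ√(4λ²−2)/(4λ²−1); moreover ε_min(√3/2) = √3/2,
ε_min(1) = 2√2/3, and ε_min is continuous at λ = √3/2. -/
theorem werner_branch_two :
    (∀ lam ∈ Set.Icc (Real.sqrt 3 / 2) (1 : ℝ),
      (∀ nx ∈ Set.Ico (-1 : ℝ) 0,
        epsFun lam (-(1 / Real.sqrt (4 * lam ^ 2 - 2))) ≤ epsFun lam nx) ∧
      epsFun lam (-(1 / Real.sqrt (4 * lam ^ 2 - 2)))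
        = 2 * lam * Real.sqrt (4 * lam ^ 2 - 2) / (4 * lam ^ 2 - 1)) ∧
    wernerEpsMin (Real.sqrt 3 / 2) = Real.sqrt 3 / 2 ∧
    wernerEpsMin 1 = 2 * Real.sqrt 2 / 3 ∧
    ContinuousAt wernerEpsMin (Real.sqrt 3 / 2) := by
  refine ⟨fun lam ⟨hlo, hhi⟩ => ?_, if_pos le_rfl, ?_,
    continuousAt_wernerEpsMin_sqrt_three_div_two⟩
  · have hs1 := one_le_sqrt_four_mul_sq_sub_two hlo
    have hs2 : √(4 * lam ^ 2 - 2) ^ 2 = 4 * lam ^ 2 - 2 :=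
      sq_sqrt (by linarith [one_le_sqrt.1 hs1])
    have hlam0 : 0 ≤ lam := le_trans (by positivity) hlo
    exact ⟨fun nx ⟨hnx1, hnx0⟩ => epsFun_neg_inv_le hlam0 hhi hs1 hs2 hnx1 hnx0,
      epsFun_neg_inv (by linarith) hs2⟩
  · have hone : (1 : ℝ) ∈ Ici (√3 / 2) :=
      (pow_le_one_iff_of_nonneg (a := √3 / 2) (by positivity) two_ne_zero).1
        (by rw [sqrt_three_div_two_sq]; norm_num)
    rw [wernerEpsMin_eqOn_Ici hone, wernerEpsBranch]
    norm_num
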